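/- Fix h > 0 and a bounded function b : ℤ → ℝ. For every φ = (φ¹, φ²) ∈ ℓ²(ℤ, ℂ²) there exists a unique continuously differentiable map ψ = (ψ¹, ψ²) : [0, ∞) → ℓ²(ℤ, ℂ²) with ψ(0) = φ such that for every n ∈ ℤ and z ≥ 0: i·(d/dz)ψ¹_n(z) = −i h⁻¹(ψ²_{n+1}(z) − ψ²_n(z)) + b(n)ψ¹_n(z) − |ψ¹_n(z)|²ψ¹_n(z) and i·(d/dz)ψ²_n(z) = −i h⁻¹(ψ¹_n(z) − ψ¹_{n−1}(z)) − b(n)ψ²_n(z) − |ψ²_n(z)|²ψ²_n(z). Moreover the ℓ² norm is conserved: Σ_{n∈ℤ} (|ψ¹_n(z)|² + |ψ²_n(z)|²) = Σ_{n∈ℤ} (|φ¹_n|² + |φ²_n|²) for all z ≥ 0. -/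

import Mathlib

open Set

/-- `ψ : ℝ → ℓ²(ℤ, ℂ²)` is a continuously differentiable solution (on `[0,∞)`) of the
discrete nonlinear Dirac equation with lattice spacing `h`, mass `b` and initial datum `φ`:
`i (ψ¹_n)' = −i h⁻¹(ψ²_{n+1} − ψ²_n) + b(n)ψ¹_n − |ψ¹_n|²ψ¹_n`,
`i (ψ²_n)' = −i h⁻¹(ψ¹_n − ψ¹_{n−1}) − b(n)ψ²_n − |ψ²_n|²ψ²_n`. -/
def IsDiscreteNLDSolution (h : ℝ) (b : ℤ → ℝ) (φ : lp (fun _ : ℤ => ℂ × ℂ) 2)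
    (ψ : ℝ → lp (fun _ : ℤ => ℂ × ℂ) 2) : Prop :=
  ψ 0 = φ ∧
  ∃ ψ' : ℝ → lp (fun _ : ℤ => ℂ × ℂ) 2,
    ContinuousOn ψ' (Ici 0) ∧
    (∀ z ∈ Ici (0 : ℝ), HasDerivWithinAt ψ (ψ' z) (Ici 0) z) ∧
    (∀ z ∈ Ici (0 : ℝ), ∀ n : ℤ,
      Complex.I * ((ψ' z) n).1 =
        -Complex.I * (h⁻¹ : ℂ) * (((ψ z) (n + 1)).2 - ((ψ z) n).2)
          + (b n : ℂ) * ((ψ z) n).1 - (‖((ψ z) n).1‖ ^ 2 : ℂ) * ((ψ z) n).1 ∧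
      Complex.I * ((ψ' z) n).2 =
        -Complex.I * (h⁻¹ : ℂ) * (((ψ z) n).1 - ((ψ z) (n - 1)).1)
          - (b n : ℂ) * ((ψ z) n).2 - (‖((ψ z) n).2‖ ^ 2 : ℂ) * ((ψ z) n).2)

section NLDOpen
open Complex ENNReal

noncomputable section NLDAux

/-- truncated cubic nonlinearity on `ℂ` -/
def nldCub (R : ℝ) (a : ℂ) : ℂ := ((min ‖a‖ R) ^ 2 : ℝ) * a

lemma nldCub_eq {R : ℝ} {a : ℂ} (ha : ‖a‖ ≤ R) : nldCub R a = (‖a‖ ^ 2 : ℝ) * a := by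
  rw [nldCub, min_eq_left ha]

lemma nldCub_zero (R : ℝ) : nldCub R 0 = 0 := by simp [nldCub]

lemma norm_ofReal_sq (p : ℝ) : ‖((p ^ 2 : ℝ) : ℂ)‖ = p ^ 2 := by
  rw [Complex.norm_real, Real.norm_eq_abs, _root_.abs_of_nonneg (by positivity)]

private lemma nldCub_lip_aux {R : ℝ} (hR : 0 ≤ R) {a c : ℂ} (hac : ‖a‖ ≤ ‖c‖) :
    ‖nldCub R a - nldCub R c‖ ≤ 5 * R ^ 2 * ‖a - c‖ := by
  set p := min ‖a‖ R with hp
  set q := min ‖c‖ R with hq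
  have hkey : nldCub R a - nldCub R c
      = ((p ^ 2 : ℝ) : ℂ) * (a - c) + (((p ^ 2 : ℝ) : ℂ) - ((q ^ 2 : ℝ) : ℂ)) * c := by
    simp only [nldCub]; ring
  have hpa : 0 ≤ p := le_min (norm_nonneg a) hR
  have hpq : p ≤ q := min_le_min hac le_rfl
  have hqR : q ≤ R := min_le_right _ _
  have hδ : ‖c‖ - ‖a‖ ≤ ‖a - c‖ := by
    have := norm_sub_norm_le c a
    rwa [norm_sub_rev] at this
  have hδ0 : (0:ℝ) ≤ ‖a - c‖ := norm_nonneg _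
  have h1 : ‖((p ^ 2 : ℝ) : ℂ) * (a - c)‖ ≤ R ^ 2 * ‖a - c‖ := by
    rw [norm_mul, norm_ofReal_sq]
    have : p ^ 2 ≤ R ^ 2 := by nlinarith [hpq.trans hqR]
    nlinarith
  have h2 : ‖(((p ^ 2 : ℝ) : ℂ) - ((q ^ 2 : ℝ) : ℂ)) * c‖ ≤ 4 * R ^ 2 * ‖a - c‖ := by
    rw [norm_mul, ← Complex.ofReal_sub, Complex.norm_real, Real.norm_eq_abs,
      _root_.abs_of_nonpos (by nlinarith), neg_sub]
    -- goal : (q^2 - p^2) * ‖c‖ ≤ 4 * R^2 * ‖a-c‖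
    have hclaim : (q - p) * ‖c‖ ≤ 2 * R * ‖a - c‖ := by
      rcases le_or_gt ‖c‖ R with hcR | hcR
      · have hq' : q = ‖c‖ := min_eq_left hcR
        have hp' : p = ‖a‖ := min_eq_left (hac.trans hcR)
        rw [hq', hp']
        calc (‖c‖ - ‖a‖) * ‖c‖ ≤ ‖a - c‖ * R :=
              mul_le_mul hδ hcR (norm_nonneg c) hδ0
          _ ≤ 2 * R * ‖a - c‖ := by nlinarith [mul_nonneg hR hδ0]
      · have hq' : q = R := min_eq_right hcR.le
        rcases le_or_gt R ‖a‖ with haR | haR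
        · have hp' : p = R := min_eq_right haR
          rw [hq', hp']
          simp only [sub_self, zero_mul]
          positivity
        · have hp' : p = ‖a‖ := min_eq_left haR.le
          rw [hq', hp']
          have h3 : R - ‖a‖ ≤ ‖a - c‖ := by nlinarith
          have t1 : (R - ‖a‖) * ‖a‖ ≤ ‖a - c‖ * R :=
            mul_le_mul h3 haR.le (norm_nonneg a) hδ0
          have t2 : (R - ‖a‖) * (‖c‖ - ‖a‖) ≤ R * ‖a - c‖ :=
            mul_le_mul (by linarith [norm_nonneg a]) hδ (by linarith) hR
          nlinarith [mul_nonneg hR hδ0]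
    have e : (q ^ 2 - p ^ 2) * ‖c‖ = (q + p) * ((q - p) * ‖c‖) := by ring
    rw [e]
    have hqp2 : q + p ≤ 2 * R := by linarith [hpq.trans hqR]
    have hnn : 0 ≤ (q - p) * ‖c‖ := mul_nonneg (by linarith) (norm_nonneg c)
    calc (q + p) * ((q - p) * ‖c‖) ≤ (2 * R) * (2 * R * ‖a - c‖) :=
          mul_le_mul hqp2 hclaim hnn (by linarith)
      _ = 4 * R ^ 2 * ‖a - c‖ := by ring
  calc ‖nldCub R a - nldCub R c‖ ≤ ‖((p ^ 2 : ℝ) : ℂ) * (a - c)‖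
        + ‖(((p ^ 2 : ℝ) : ℂ) - ((q ^ 2 : ℝ) : ℂ)) * c‖ := by rw [hkey]; exact norm_add_le _ _
    _ ≤ 5 * R ^ 2 * ‖a - c‖ := by nlinarith

lemma nldCub_lip {R : ℝ} (hR : 0 ≤ R) (a c : ℂ) :
    ‖nldCub R a - nldCub R c‖ ≤ 5 * R ^ 2 * ‖a - c‖ := by
  rcases le_total ‖a‖ ‖c‖ with hac | hac
  · exact nldCub_lip_aux hR hac
  · rw [norm_sub_rev, norm_sub_rev a c]; exact nldCub_lip_aux hR hac

end NLDAux
noncomputable section NLDAux2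

-- generic ℓ² facts
lemma lp2_summable {G : ℤ → Type*} [∀ i, NormedAddCommGroup (G i)] (f : lp G 2) :
    Summable (fun n => ‖f n‖ ^ 2) := by
  have h := (memℓp_gen_iff (p := 2) (by norm_num) (f := ⇑f)).mp (lp.memℓp f)
  convert h using 2 with n
  rw [show ((2:ℝ≥0∞).toReal) = ((2:ℕ):ℝ) by norm_num, Real.rpow_natCast]

lemma lp2_norm_sq {G : ℤ → Type*} [∀ i, NormedAddCommGroup (G i)] (f : lp G 2) :
    ‖f‖ ^ 2 = ∑' n, ‖f n‖ ^ 2 := by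
  have h := lp.norm_rpow_eq_tsum (p := 2) (by norm_num) f
  have e : ∀ x : ℝ, x ^ ((2:ℝ≥0∞).toReal) = x ^ 2 := fun x => by
    rw [show ((2:ℝ≥0∞).toReal) = ((2:ℕ):ℝ) by norm_num, Real.rpow_natCast]
  rw [e] at h
  rw [h]
  exact tsum_congr fun n => e _

lemma summable_shift (f : ℤ → ℝ) (hf : Summable f) (k : ℤ) :
    Summable (fun n => f (n + k)) := ((Equiv.addRight k).summable_iff).mpr hf

lemma summable_shift' (f : ℤ → ℝ) (hf : Summable f) (k : ℤ) :
    Summable (fun n => f (n - k)) := ((Equiv.subRight k).summable_iff).mpr hf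

end NLDAux2

noncomputable section NLDField

/-- the (truncated) discrete nonlinear Dirac vector field, pointwise -/
def nldF (h : ℝ) (b : ℤ → ℝ) (R : ℝ) (x : ℤ → ℂ × ℂ) (n : ℤ) : ℂ × ℂ :=
  (-Complex.I * (-Complex.I * (h⁻¹ : ℂ) * ((x (n + 1)).2 - (x n).2)
      + (b n : ℂ) * (x n).1 - nldCub R ((x n).1)),
   -Complex.I * (-Complex.I * (h⁻¹ : ℂ) * ((x n).1 - (x (n - 1)).1)
      - (b n : ℂ) * (x n).2 - nldCub R ((x n).2)))

lemma nldF_zero (h : ℝ) (b : ℤ → ℝ) (R : ℝ) (n : ℤ) : nldF h b R 0 n = 0 := by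
  simp [nldF, nldCub_zero]

lemma nldF_lip_pt {h : ℝ} (hh : 0 < h) (b : ℤ → ℝ) {R B : ℝ} (hR : 0 ≤ R) (hB : 0 ≤ B)
    (hbB : ∀ n, |b n| ≤ B) (x y : ℤ → ℂ × ℂ) (n : ℤ) :
    ‖nldF h b R x n - nldF h b R y n‖ ≤ (h⁻¹ + B + 5 * R ^ 2) *
      (‖x (n + 1) - y (n + 1)‖ + ‖x n - y n‖ + ‖x (n - 1) - y (n - 1)‖) := by
  have hhi : (0:ℝ) ≤ h⁻¹ := by positivity
  set d : ℤ → ℂ × ℂ := fun m => x m - y m with hd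
  have hd1 : ∀ m, ‖(x m).1 - (y m).1‖ ≤ ‖d m‖ := fun m => by
    exact norm_fst_le (d m)
  have hd2 : ∀ m, ‖(x m).2 - (y m).2‖ ≤ ‖d m‖ := fun m => by
    exact norm_snd_le (d m)
  have hdnn : ∀ m, (0:ℝ) ≤ ‖d m‖ := fun m => norm_nonneg _
  have hIh : ∀ w : ℂ, ‖-Complex.I * (h⁻¹ : ℂ) * w‖ = h⁻¹ * ‖w‖ := fun w => by
    rw [norm_mul, norm_mul, norm_neg, Complex.norm_I, one_mul, norm_inv, Complex.norm_real,
      Real.norm_eq_abs, _root_.abs_of_pos hh]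
  have hcomp1 : ‖(nldF h b R x n - nldF h b R y n).1‖
      ≤ (h⁻¹ + B + 5 * R ^ 2) * (‖d (n+1)‖ + ‖d n‖ + ‖d (n-1)‖) := by
    have he : (nldF h b R x n - nldF h b R y n).1
        = -Complex.I * (-Complex.I * (h⁻¹ : ℂ) * (((x (n+1)).2 - (y (n+1)).2) - ((x n).2 - (y n).2))
            + (b n : ℂ) * ((x n).1 - (y n).1)
            - (nldCub R ((x n).1) - nldCub R ((y n).1))) := by
      simp only [nldF, Prod.fst_sub]; ring
    rw [he, norm_mul, norm_neg, Complex.norm_I, one_mul]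
    have t1 : ‖-Complex.I * (h⁻¹ : ℂ) * (((x (n+1)).2 - (y (n+1)).2) - ((x n).2 - (y n).2))‖
        ≤ h⁻¹ * (‖d (n+1)‖ + ‖d n‖) := by
      rw [hIh]
      have := (norm_sub_le ((x (n+1)).2 - (y (n+1)).2) ((x n).2 - (y n).2)).trans
        (add_le_add (hd2 (n+1)) (hd2 n))
      nlinarith
    have t2 : ‖(b n : ℂ) * ((x n).1 - (y n).1)‖ ≤ B * ‖d n‖ := by
      rw [norm_mul, Complex.norm_real, Real.norm_eq_abs]
      exact mul_le_mul (hbB n) (hd1 n) (norm_nonneg _) hB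
    have t3 : ‖nldCub R ((x n).1) - nldCub R ((y n).1)‖ ≤ 5 * R ^ 2 * ‖d n‖ := by
      refine (nldCub_lip hR _ _).trans ?_
      have := hd1 n
      nlinarith
    calc ‖_ + _ - _‖ ≤ ‖-Complex.I * (h⁻¹ : ℂ) * (((x (n+1)).2 - (y (n+1)).2) - ((x n).2 - (y n).2))
            + (b n : ℂ) * ((x n).1 - (y n).1)‖ + ‖nldCub R ((x n).1) - nldCub R ((y n).1)‖ :=
          norm_sub_le _ _
      _ ≤ ‖-Complex.I * (h⁻¹ : ℂ) * (((x (n+1)).2 - (y (n+1)).2) - ((x n).2 - (y n).2))‖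
            + ‖(b n : ℂ) * ((x n).1 - (y n).1)‖ + ‖nldCub R ((x n).1) - nldCub R ((y n).1)‖ := by
          have := norm_add_le (-Complex.I * (h⁻¹ : ℂ) * (((x (n+1)).2 - (y (n+1)).2) - ((x n).2 - (y n).2)))
            ((b n : ℂ) * ((x n).1 - (y n).1))
          linarith
      _ ≤ (h⁻¹ + B + 5 * R ^ 2) * (‖d (n+1)‖ + ‖d n‖ + ‖d (n-1)‖) := by
          nlinarith [hdnn (n+1), hdnn n, hdnn (n-1), t1, t2, t3]
  have hcomp2 : ‖(nldF h b R x n - nldF h b R y n).2‖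
      ≤ (h⁻¹ + B + 5 * R ^ 2) * (‖d (n+1)‖ + ‖d n‖ + ‖d (n-1)‖) := by
    have he : (nldF h b R x n - nldF h b R y n).2
        = -Complex.I * (-Complex.I * (h⁻¹ : ℂ) * (((x n).1 - (y n).1) - ((x (n-1)).1 - (y (n-1)).1))
            - (b n : ℂ) * ((x n).2 - (y n).2)
            - (nldCub R ((x n).2) - nldCub R ((y n).2))) := by
      simp only [nldF, Prod.snd_sub]; ring
    rw [he, norm_mul, norm_neg, Complex.norm_I, one_mul]
    have t1 : ‖-Complex.I * (h⁻¹ : ℂ) * (((x n).1 - (y n).1) - ((x (n-1)).1 - (y (n-1)).1))‖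
        ≤ h⁻¹ * (‖d n‖ + ‖d (n-1)‖) := by
      rw [hIh]
      have := (norm_sub_le ((x n).1 - (y n).1) ((x (n-1)).1 - (y (n-1)).1)).trans
        (add_le_add (hd1 n) (hd1 (n-1)))
      nlinarith
    have t2 : ‖(b n : ℂ) * ((x n).2 - (y n).2)‖ ≤ B * ‖d n‖ := by
      rw [norm_mul, Complex.norm_real, Real.norm_eq_abs]
      exact mul_le_mul (hbB n) (hd2 n) (norm_nonneg _) hB
    have t3 : ‖nldCub R ((x n).2) - nldCub R ((y n).2)‖ ≤ 5 * R ^ 2 * ‖d n‖ := by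
      refine (nldCub_lip hR _ _).trans ?_
      have := hd2 n
      nlinarith
    calc ‖_ - _ - _‖ ≤ ‖-Complex.I * (h⁻¹ : ℂ) * (((x n).1 - (y n).1) - ((x (n-1)).1 - (y (n-1)).1))
            - (b n : ℂ) * ((x n).2 - (y n).2)‖ + ‖nldCub R ((x n).2) - nldCub R ((y n).2)‖ :=
          norm_sub_le _ _
      _ ≤ ‖-Complex.I * (h⁻¹ : ℂ) * (((x n).1 - (y n).1) - ((x (n-1)).1 - (y (n-1)).1))‖
            + ‖(b n : ℂ) * ((x n).2 - (y n).2)‖ + ‖nldCub R ((x n).2) - nldCub R ((y n).2)‖ := by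
          have := norm_sub_le (-Complex.I * (h⁻¹ : ℂ) * (((x n).1 - (y n).1) - ((x (n-1)).1 - (y (n-1)).1)))
            ((b n : ℂ) * ((x n).2 - (y n).2))
          linarith
      _ ≤ (h⁻¹ + B + 5 * R ^ 2) * (‖d (n+1)‖ + ‖d n‖ + ‖d (n-1)‖) := by
          nlinarith [hdnn (n+1), hdnn n, hdnn (n-1), t1, t2, t3]
  have := Prod.norm_def (nldF h b R x n - nldF h b R y n)
  rw [this]
  exact max_le hcomp1 hcomp2

end NLDField

noncomputable section NLDlp

abbrev NLDSp := lp (fun _ : ℤ => ℂ × ℂ) 2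

lemma nld_sq_bound {K : ℝ} (hK : 0 ≤ K) (u : ℤ → ℂ × ℂ) (v : NLDSp)
    (hu : ∀ n, ‖u n‖ ≤ K * (‖v (n + 1)‖ + ‖v n‖ + ‖v (n - 1)‖)) (n : ℤ) :
    ‖u n‖ ^ 2 ≤ 3 * K ^ 2 * (‖v (n + 1)‖ ^ 2 + ‖v n‖ ^ 2 + ‖v (n - 1)‖ ^ 2) := by
  have h0 : (0:ℝ) ≤ ‖u n‖ := norm_nonneg _
  have h1 := norm_nonneg (v (n+1)); have h2 := norm_nonneg (v n); have h3 := norm_nonneg (v (n-1))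
  nlinarith [hu n, sq_nonneg (‖v (n+1)‖ - ‖v n‖), sq_nonneg (‖v (n+1)‖ - ‖v (n-1)‖),
    sq_nonneg (‖v n‖ - ‖v (n-1)‖), mul_nonneg hK (add_nonneg (add_nonneg h1 h2) h3)]

lemma nld_summable_maj (v : NLDSp) (K : ℝ) :
    Summable (fun n => 3 * K ^ 2 * (‖v (n + 1)‖ ^ 2 + ‖v n‖ ^ 2 + ‖v (n - 1)‖ ^ 2)) :=
  (((summable_shift _ (lp2_summable v) 1).add (lp2_summable v)).add
    (summable_shift' _ (lp2_summable v) 1)).mul_left _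

lemma nld_memℓp {K : ℝ} (hK : 0 ≤ K) (u : ℤ → ℂ × ℂ) (v : NLDSp)
    (hu : ∀ n, ‖u n‖ ≤ K * (‖v (n + 1)‖ + ‖v n‖ + ‖v (n - 1)‖)) : Memℓp u 2 := by
  apply memℓp_gen
  have : Summable (fun n => ‖u n‖ ^ 2) :=
    (nld_summable_maj v K).of_nonneg_of_le (fun n => by positivity)
      (fun n => nld_sq_bound hK u v hu n)
  convert this using 2 with n
  rw [show ((2:ℝ≥0∞).toReal) = ((2:ℕ):ℝ) by norm_num, Real.rpow_natCast]

lemma nld_norm_le {K : ℝ} (hK : 0 ≤ K) (U : NLDSp) (v : NLDSp)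
    (hu : ∀ n, ‖U n‖ ≤ K * (‖v (n + 1)‖ + ‖v n‖ + ‖v (n - 1)‖)) :
    ‖U‖ ≤ 3 * K * ‖v‖ := by
  have husq : Summable (fun n => ‖U n‖ ^ 2) := lp2_summable U
  have hsq : ‖U‖ ^ 2 ≤ (3 * K * ‖v‖) ^ 2 := by
    rw [lp2_norm_sq]
    have step1 : ∑' n, ‖U n‖ ^ 2
        ≤ ∑' n, 3 * K ^ 2 * (‖v (n + 1)‖ ^ 2 + ‖v n‖ ^ 2 + ‖v (n - 1)‖ ^ 2) :=
      Summable.tsum_le_tsum (fun n => nld_sq_bound hK U v hu n) husq (nld_summable_maj v K)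
    have step2 : ∑' n, 3 * K ^ 2 * (‖v (n + 1)‖ ^ 2 + ‖v n‖ ^ 2 + ‖v (n - 1)‖ ^ 2)
        = 3 * K ^ 2 * (∑' n, ‖v (n + 1)‖ ^ 2 + ∑' n, ‖v n‖ ^ 2 + ∑' n, ‖v (n - 1)‖ ^ 2) := by
      rw [tsum_mul_left]
      congr 1
      rw [Summable.tsum_add ((summable_shift _ (lp2_summable v) 1).add (lp2_summable v))
        (summable_shift' _ (lp2_summable v) 1),
        Summable.tsum_add (summable_shift _ (lp2_summable v) 1) (lp2_summable v)]
    have e1 : ∑' n : ℤ, ‖v (n + 1)‖ ^ 2 = ∑' n, ‖v n‖ ^ 2 :=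
      (Equiv.addRight (1:ℤ)).tsum_eq (fun n => ‖v n‖ ^ 2)
    have e2 : ∑' n : ℤ, ‖v (n - 1)‖ ^ 2 = ∑' n, ‖v n‖ ^ 2 :=
      (Equiv.subRight (1:ℤ)).tsum_eq (fun n => ‖v n‖ ^ 2)
    have hv2 : ∑' n, ‖v n‖ ^ 2 = ‖v‖ ^ 2 := (lp2_norm_sq v).symm
    rw [step2, e1, e2, hv2] at step1
    calc ∑' n, ‖U n‖ ^ 2 ≤ 3 * K ^ 2 * (‖v‖ ^ 2 + ‖v‖ ^ 2 + ‖v‖ ^ 2) := step1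
      _ = (3 * K * ‖v‖) ^ 2 := by ring
  have h3 : (0:ℝ) ≤ 3 * K * ‖v‖ := by positivity
  calc ‖U‖ = Real.sqrt (‖U‖ ^ 2) := (Real.sqrt_sq (norm_nonneg _)).symm
    _ ≤ Real.sqrt ((3 * K * ‖v‖) ^ 2) := Real.sqrt_le_sqrt hsq
    _ = 3 * K * ‖v‖ := Real.sqrt_sq h3

end NLDlp

noncomputable section NLDOp

variable {h : ℝ} (b : ℤ → ℝ) {R B : ℝ}

/-- the truncated field as a map on `ℓ²` -/
def NLD (hh : 0 < h) (hR : 0 ≤ R) (hB : 0 ≤ B) (hbB : ∀ n, |b n| ≤ B) (x : NLDSp) : NLDSp :=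
  ⟨nldF h b R ⇑x, by
    apply nld_memℓp (K := h⁻¹ + B + 5 * R ^ 2) (by positivity) _ x
    intro n
    have := nldF_lip_pt hh b hR hB hbB ⇑x 0 n
    simpa [nldF_zero] using this⟩

variable (hh : 0 < h) (hR : 0 ≤ R) (hB : 0 ≤ B) (hbB : ∀ n, |b n| ≤ B)

lemma NLD_apply (x : NLDSp) (n : ℤ) : (NLD b hh hR hB hbB x) n = nldF h b R ⇑x n := rfl

lemma NLD_norm_sub_le (x y : NLDSp) :
    ‖NLD b hh hR hB hbB x - NLD b hh hR hB hbB y‖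
      ≤ 3 * (h⁻¹ + B + 5 * R ^ 2) * ‖x - y‖ := by
  apply nld_norm_le (by positivity)
  intro n
  rw [lp.coeFn_sub, lp.coeFn_sub x y]
  simp only [Pi.sub_apply]
  exact nldF_lip_pt hh b hR hB hbB ⇑x ⇑y n

lemma NLD_lip : LipschitzWith (Real.toNNReal (3 * (h⁻¹ + B + 5 * R ^ 2)))
    (NLD b hh hR hB hbB) := by
  apply LipschitzWith.of_dist_le_mul
  intro x y
  rw [dist_eq_norm, dist_eq_norm, Real.coe_toNNReal _ (by positivity)]
  exact NLD_norm_sub_le b hh hR hB hbB x y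

lemma NLD_zero : NLD b hh hR hB hbB 0 = 0 := by
  apply lp.ext
  rw [lp.coeFn_zero]
  funext n
  show nldF h b R ⇑(0 : NLDSp) n = 0
  rw [lp.coeFn_zero, nldF_zero]

lemma NLD_norm_le (x : NLDSp) :
    ‖NLD b hh hR hB hbB x‖ ≤ 3 * (h⁻¹ + B + 5 * R ^ 2) * ‖x‖ := by
  have := NLD_norm_sub_le b hh hR hB hbB x 0
  rwa [NLD_zero, sub_zero, sub_zero] at this

end NLDOp

noncomputable section NLDHilbert

abbrev NLDH := lp (fun _ : ℤ => WithLp 2 (ℂ × ℂ)) 2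

lemma memℓp_two {G : ℤ → Type*} [∀ i, NormedAddCommGroup (G i)] {f : ∀ i, G i}
    (hf : Summable fun n => ‖f n‖ ^ 2) : Memℓp f 2 := by
  apply memℓp_gen
  convert hf using 2 with n
  rw [show ((2:ℝ≥0∞).toReal) = ((2:ℕ):ℝ) by norm_num, Real.rpow_natCast]

lemma withlp_norm_sq (p : ℂ × ℂ) :
    ‖(WithLp.equiv 2 (ℂ × ℂ)).symm p‖ ^ 2 = ‖p.1‖ ^ 2 + ‖p.2‖ ^ 2 := by
  rw [WithLp.prod_norm_sq_eq_of_L2, WithLp.equiv_symm_apply, WithLp.toLp_fst, WithLp.toLp_snd]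

lemma toL2_mem (x : NLDSp) : Memℓp (fun n => (WithLp.equiv 2 (ℂ × ℂ)).symm (x n)) 2 := by
  apply memℓp_two
  apply ((lp2_summable x).mul_left 2).of_nonneg_of_le (fun n => by positivity)
  intro n
  rw [withlp_norm_sq]
  have h1 := norm_fst_le (x n); have h2 := norm_snd_le (x n)
  have := norm_nonneg (x n); have := norm_nonneg ((x n).1); have := norm_nonneg ((x n).2)
  nlinarith

/-- transfer to a true Hilbert space (`ℓ²` of the `L²`-product) -/
def toL2 : NLDSp →L[ℝ] NLDH := by
  refine LinearMap.mkContinuous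
    { toFun := fun x => (⟨fun n => (WithLp.equiv 2 (ℂ × ℂ)).symm (x n), toL2_mem x⟩ : NLDH)
      map_add' := ?_
      map_smul' := ?_ } 2 ?_
  · intro x y
    apply lp.ext
    funext n
    show (WithLp.equiv 2 (ℂ × ℂ)).symm ((x + y) n) = _
    rfl
  · intro c x
    apply lp.ext
    funext n
    show (WithLp.equiv 2 (ℂ × ℂ)).symm ((c • x) n) = _
    rfl
  · intro x
    show ‖(⟨fun n => (WithLp.equiv 2 (ℂ × ℂ)).symm (x n), toL2_mem x⟩ : NLDH)‖ ≤ 2 * ‖x‖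
    have hsq : ‖(⟨fun n => (WithLp.equiv 2 (ℂ × ℂ)).symm (x n), toL2_mem x⟩ : NLDH)‖ ^ 2
        ≤ (2 * ‖x‖) ^ 2 := by
      rw [lp2_norm_sq]
      have hle : ∀ n : ℤ, ‖(WithLp.equiv 2 (ℂ × ℂ)).symm (x n)‖ ^ 2 ≤ 2 * ‖x n‖ ^ 2 := by
        intro n
        rw [withlp_norm_sq]
        have h1 := norm_fst_le (x n); have h2 := norm_snd_le (x n)
        have := norm_nonneg ((x n).1); have := norm_nonneg ((x n).2)
        nlinarith
      calc ∑' n, ‖(WithLp.equiv 2 (ℂ × ℂ)).symm (x n)‖ ^ 2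
          ≤ ∑' n, 2 * ‖x n‖ ^ 2 := Summable.tsum_le_tsum hle
            (lp2_summable (⟨fun n => (WithLp.equiv 2 (ℂ × ℂ)).symm (x n), toL2_mem x⟩ : NLDH))
            ((lp2_summable x).mul_left 2)
        _ = 2 * ∑' n, ‖x n‖ ^ 2 := tsum_mul_left
        _ = 2 * ‖x‖ ^ 2 := by rw [← lp2_norm_sq]
        _ ≤ (2 * ‖x‖) ^ 2 := by nlinarith [norm_nonneg x, sq_nonneg ‖x‖]
    calc ‖(⟨fun n => (WithLp.equiv 2 (ℂ × ℂ)).symm (x n), toL2_mem x⟩ : NLDH)‖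
        = Real.sqrt (‖(⟨fun n => (WithLp.equiv 2 (ℂ × ℂ)).symm (x n), toL2_mem x⟩ : NLDH)‖ ^ 2) :=
          (Real.sqrt_sq (norm_nonneg _)).symm
      _ ≤ Real.sqrt ((2 * ‖x‖) ^ 2) := Real.sqrt_le_sqrt hsq
      _ = 2 * ‖x‖ := Real.sqrt_sq (by positivity)

lemma toL2_apply (x : NLDSp) (n : ℤ) :
    (toL2 x) n = (WithLp.equiv 2 (ℂ × ℂ)).symm (x n) := rfl

lemma toL2_norm_sq_eq (x : NLDSp) :
    ‖toL2 x‖ ^ 2 = ∑' n, (‖(x n).1‖ ^ 2 + ‖(x n).2‖ ^ 2) := by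
  rw [lp2_norm_sq]
  exact tsum_congr fun n => withlp_norm_sq (x n)

end NLDHilbert

noncomputable section NLDConserve

open scoped InnerProductSpace

lemma nld_scalar_re (hi bn r1 r2 : ℝ) (a1 a2 c2 d1 : ℂ) :
    ((starRingEnd ℂ) (-Complex.I * (-Complex.I * (hi : ℂ) * (c2 - a2)
        + (bn : ℂ) * a1 - ((r1 : ℂ) * a1))) * a1
      + (starRingEnd ℂ) (-Complex.I * (-Complex.I * (hi : ℂ) * (a1 - d1)
        - (bn : ℂ) * a2 - ((r2 : ℂ) * a2))) * a2).re
    = -hi * (((starRingEnd ℂ) ((c2 : ℂ)) * a1).re - ((starRingEnd ℂ) a2 * d1).re) := by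
  simp only [Complex.mul_re, Complex.mul_im, Complex.add_re, Complex.add_im, Complex.sub_re,
    Complex.sub_im, Complex.conj_re, Complex.conj_im, Complex.I_re, Complex.I_im,
    Complex.neg_re, Complex.neg_im, Complex.ofReal_re, Complex.ofReal_im, map_mul, map_sub,
    map_add, Complex.conj_I]
  ring

variable {h : ℝ} (b : ℤ → ℝ) {R B : ℝ}
variable (hh : 0 < h) (hR : 0 ≤ R) (hB : 0 ≤ B) (hbB : ∀ n, |b n| ≤ B)

lemma NLD_re_inner (x : NLDSp) :
    (inner ℂ (toL2 (NLD b hh hR hB hbB x)) (toL2 x) : ℂ).re = 0 := by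
  set A : ℤ → ℝ := fun n => ((starRingEnd ℂ) ((x (n + 1)).2) * ((x n).1)).re with hA
  have hAsum : Summable A := by
    apply Summable.of_abs
    apply (((summable_shift _ (lp2_summable x) 1).add (lp2_summable x)).mul_left
      (1/2 : ℝ)).of_nonneg_of_le (fun n => abs_nonneg _)
    intro n
    have h1 : |A n| ≤ ‖(x (n + 1)).2‖ * ‖(x n).1‖ := by
      calc |A n| ≤ ‖(starRingEnd ℂ) ((x (n + 1)).2) * ((x n).1)‖ := Complex.abs_re_le_norm _
        _ = ‖(x (n + 1)).2‖ * ‖(x n).1‖ := by rw [norm_mul, RCLike.norm_conj]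
    have h2 := norm_fst_le (x n); have h3 := norm_snd_le (x (n + 1))
    have h4 := norm_nonneg ((x n).1); have h5 := norm_nonneg ((x (n + 1)).2)
    have h6 := norm_nonneg (x n); have h7 := norm_nonneg (x (n + 1))
    nlinarith [sq_nonneg (‖x (n + 1)‖ - ‖x n‖)]
  have hterm : ∀ n : ℤ, ((inner ℂ ((toL2 (NLD b hh hR hB hbB x)) n) ((toL2 x) n) : ℂ)).re
      = -h⁻¹ * (A n - A (n - 1)) := by
    intro n
    rw [toL2_apply, toL2_apply, WithLp.prod_inner_apply]
    rw [WithLp.equiv_symm_apply, WithLp.ofLp_toLp, WithLp.ofLp_toLp]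
    rw [RCLike.inner_apply', RCLike.inner_apply']
    rw [NLD_apply]
    show ((starRingEnd ℂ) ((nldF h b R (⇑x) n).1) * ((x n).1)
      + (starRingEnd ℂ) ((nldF h b R (⇑x) n).2) * ((x n).2)).re = _
    simp only [nldF, nldCub]
    rw [show ((h⁻¹ : ℂ)) = (((h⁻¹ : ℝ)) : ℂ) by rw [Complex.ofReal_inv]]
    rw [nld_scalar_re h⁻¹ (b n) ((min ‖(x n).1‖ R) ^ 2) ((min ‖(x n).2‖ R) ^ 2)
      ((x n).1) ((x n).2) ((x (n + 1)).2) ((x (n - 1)).1)]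
    simp only [hA]
    rw [show n - 1 + 1 = n by ring]
  have hsuminner := lp.summable_inner (𝕜 := ℂ) (toL2 (NLD b hh hR hB hbB x)) (toL2 x)
  rw [lp.inner_eq_tsum]
  have hre : (∑' n : ℤ, (inner ℂ ((toL2 (NLD b hh hR hB hbB x)) n) ((toL2 x) n) : ℂ)).re
      = ∑' n : ℤ, ((inner ℂ ((toL2 (NLD b hh hR hB hbB x)) n) ((toL2 x) n) : ℂ)).re := by
    have := Complex.reCLM.map_tsum hsuminner
    simpa using this
  rw [hre]
  have hAshift : Summable (fun n : ℤ => A (n - 1)) := summable_shift' A hAsum 1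
  calc ∑' n : ℤ, ((inner ℂ ((toL2 (NLD b hh hR hB hbB x)) n) ((toL2 x) n) : ℂ)).re
      = ∑' n : ℤ, -h⁻¹ * (A n - A (n - 1)) := tsum_congr hterm
    _ = -h⁻¹ * ∑' n : ℤ, (A n - A (n - 1)) := tsum_mul_left
    _ = -h⁻¹ * (∑' n : ℤ, A n - ∑' n : ℤ, A (n - 1)) := by rw [Summable.tsum_sub hAsum hAshift]
    _ = 0 := by
        have e2 : ∑' n : ℤ, A (n - 1) = ∑' n, A n := by
          simpa using (Equiv.subRight (1:ℤ)).tsum_eq A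
        rw [e2, sub_self, mul_zero]

end NLDConserve

noncomputable section NLDSol

open scoped InnerProductSpace

variable {h : ℝ} (b : ℤ → ℝ) {R B : ℝ}
variable (hh : 0 < h) (hR : 0 ≤ R) (hB : 0 ≤ B) (hbB : ∀ n, |b n| ≤ B)

lemma norm_le_toL2 (x : NLDSp) : ‖x‖ ≤ ‖toL2 x‖ := by
  have hsq : ‖x‖ ^ 2 ≤ ‖toL2 x‖ ^ 2 := by
    rw [lp2_norm_sq, toL2_norm_sq_eq]
    apply Summable.tsum_le_tsum _ (lp2_summable x)
    · have : Summable (fun n => ‖(toL2 x) n‖ ^ 2) := lp2_summable (toL2 x)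
      apply this.congr
      intro n
      rw [toL2_apply, withlp_norm_sq]
    · intro n
      rw [Prod.norm_def]
      rcases max_cases ‖(x n).1‖ ‖(x n).2‖ with ⟨he, _⟩ | ⟨he, _⟩ <;> rw [he] <;>
        nlinarith [norm_nonneg ((x n).1), norm_nonneg ((x n).2)]
  calc ‖x‖ = Real.sqrt (‖x‖ ^ 2) := (Real.sqrt_sq (norm_nonneg _)).symm
    _ ≤ Real.sqrt (‖toL2 x‖ ^ 2) := Real.sqrt_le_sqrt hsq
    _ = ‖toL2 x‖ := Real.sqrt_sq (norm_nonneg _)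

lemma NLD_conserved {a c : ℝ} (ψ : ℝ → NLDSp)
    (hd : ∀ t ∈ Icc a c, HasDerivWithinAt ψ (NLD b hh hR hB hbB (ψ t)) (Icc a c) t) :
    ∀ t ∈ Icc a c, ‖toL2 (ψ t)‖ ^ 2 = ‖toL2 (ψ a)‖ ^ 2 := by
  set g : ℝ → ℝ := fun t => (inner ℂ (toL2 (ψ t)) (toL2 (ψ t)) : ℂ).re with hg
  have hψcont : ContinuousOn ψ (Icc a c) := fun t ht => (hd t ht).continuousWithinAt
  have hgcont : ContinuousOn g (Icc a c) := by
    apply Complex.continuous_re.comp_continuousOn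
    exact ContinuousOn.inner (toL2.continuous.comp_continuousOn hψcont)
      (toL2.continuous.comp_continuousOn hψcont)
  have hgd : ∀ t ∈ Ico a c, HasDerivWithinAt g 0 (Ici t) t := by
    intro t ht
    have hmem : Icc a c ∈ nhdsWithin t (Ici t) := by
      apply mem_nhdsWithin.mpr
      exact ⟨Iio c, isOpen_Iio, ht.2, fun s hs => ⟨ht.1.trans hs.2, hs.1.le⟩⟩
    have h1 : HasDerivWithinAt ψ (NLD b hh hR hB hbB (ψ t)) (Ici t) t :=
      (hd t ⟨ht.1, ht.2.le⟩).mono_of_mem_nhdsWithin hmem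
    have h2 : HasDerivWithinAt (fun u => toL2 (ψ u)) (toL2 (NLD b hh hR hB hbB (ψ t)))
        (Ici t) t := toL2.hasFDerivAt.comp_hasDerivWithinAt t h1
    have h3 := h2.inner ℂ h2
    have h4 := Complex.reCLM.hasFDerivAt.comp_hasDerivWithinAt t h3
    have h5 : Complex.reCLM ((inner ℂ (toL2 (ψ t)) (toL2 (NLD b hh hR hB hbB (ψ t))) : ℂ)
        + (inner ℂ (toL2 (NLD b hh hR hB hbB (ψ t))) (toL2 (ψ t)) : ℂ)) = 0 := by
      have e1 : (inner ℂ (toL2 (ψ t)) (toL2 (NLD b hh hR hB hbB (ψ t))) : ℂ).re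
          = (inner ℂ (toL2 (NLD b hh hR hB hbB (ψ t))) (toL2 (ψ t)) : ℂ).re := by
        rw [← inner_conj_symm]
        exact (Complex.conj_re _)
      have e2 := NLD_re_inner b hh hR hB hbB (ψ t)
      have e3 : Complex.reCLM ((inner ℂ (toL2 (ψ t)) (toL2 (NLD b hh hR hB hbB (ψ t))) : ℂ)
          + (inner ℂ (toL2 (NLD b hh hR hB hbB (ψ t))) (toL2 (ψ t)) : ℂ))
          = ((inner ℂ (toL2 (ψ t)) (toL2 (NLD b hh hR hB hbB (ψ t))) : ℂ)
          + (inner ℂ (toL2 (NLD b hh hR hB hbB (ψ t))) (toL2 (ψ t)) : ℂ)).re := rfl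
      rw [e3, Complex.add_re, e1, e2]
      ring
    rw [h5] at h4
    exact h4
  have := constant_of_has_deriv_right_zero hgcont hgd
  intro t ht
  have h6 := this t ht
  have h7 : ∀ u, g u = ‖toL2 (ψ u)‖ ^ 2 := by
    intro u
    show (inner ℂ (toL2 (ψ u)) (toL2 (ψ u)) : ℂ).re = _
    exact inner_self_eq_norm_sq (𝕜 := ℂ) _
  rw [← h7, ← h7]
  exact h6

end NLDSol

noncomputable section NLDExist

variable {h : ℝ} (b : ℤ → ℝ) {R B : ℝ}
variable (hh : 0 < h) (hR : 0 ≤ R) (hB : 0 ≤ B) (hbB : ∀ n, |b n| ≤ B)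

lemma NLD_sol_norm_le {a c : ℝ} (ψ : ℝ → NLDSp)
    (hd : ∀ t ∈ Icc a c, HasDerivWithinAt ψ (NLD b hh hR hB hbB (ψ t)) (Icc a c) t) :
    ∀ t ∈ Icc a c, ‖ψ t‖ ≤ ‖toL2 (ψ a)‖ := by
  intro t ht
  have h1 := NLD_conserved b hh hR hB hbB ψ hd t ht
  have h2 : ‖toL2 (ψ t)‖ = ‖toL2 (ψ a)‖ := by
    have := congrArg Real.sqrt h1
    rwa [Real.sqrt_sq (norm_nonneg _), Real.sqrt_sq (norm_nonneg _)] at this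
  calc ‖ψ t‖ ≤ ‖toL2 (ψ t)‖ := norm_le_toL2 _
    _ = ‖toL2 (ψ a)‖ := h2

/-- local existence with uniform step size -/
lemma NLD_local {M : ℝ} (hM : 0 ≤ M) (t₀ : ℝ) (x₀ : NLDSp) (hx₀ : ‖x₀‖ ≤ M) :
    ∃ χ : ℝ → NLDSp, χ t₀ = x₀ ∧
      ∀ t ∈ Icc t₀ (t₀ + (3 * (h⁻¹ + B + 5 * R ^ 2) * (M + 1) + 1)⁻¹),
        HasDerivWithinAt χ (NLD b hh hR hB hbB (χ t))
          (Icc t₀ (t₀ + (3 * (h⁻¹ + B + 5 * R ^ 2) * (M + 1) + 1)⁻¹)) t := by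
  set L : ℝ := 3 * (h⁻¹ + B + 5 * R ^ 2) with hL
  have hL0 : 0 ≤ L := by positivity
  set τ : ℝ := (L * (M + 1) + 1)⁻¹ with hτ
  have hτ0 : 0 < τ := by positivity
  have hpl : IsPicardLindelof (fun _ (x : NLDSp) => NLD b hh hR hB hbB x)
      (tmin := t₀) (tmax := t₀ + τ) ⟨t₀, le_refl _, by linarith⟩ x₀ 1 0
      (Real.toNNReal (L * (M + 1))) (Real.toNNReal L) := by
    apply IsPicardLindelof.of_time_independent
    · intro x hx
      have h1 : ‖x‖ ≤ M + 1 := by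
        have := mem_closedBall_iff_norm.mp hx
        rw [NNReal.coe_one] at this
        calc ‖x‖ = ‖x - x₀ + x₀‖ := by rw [sub_add_cancel]
          _ ≤ ‖x - x₀‖ + ‖x₀‖ := norm_add_le _ _
          _ ≤ M + 1 := by linarith
      rw [Real.coe_toNNReal _ (by positivity)]
      calc ‖NLD b hh hR hB hbB x‖ ≤ L * ‖x‖ := NLD_norm_le b hh hR hB hbB x
        _ ≤ L * (M + 1) := by nlinarith
    · exact (NLD_lip b hh hR hB hbB).lipschitzOnWith
    · have e : max (t₀ + τ - t₀) (t₀ - t₀) = τ := by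
        rw [max_eq_left] <;> simp [hτ0.le]
      rw [Real.coe_toNNReal _ (by positivity), NNReal.coe_one, NNReal.coe_zero, sub_zero]
      show L * (M + 1) * max (t₀ + τ - t₀) (t₀ - t₀) ≤ 1
      rw [e, hτ, ← div_eq_mul_inv, div_le_one (by positivity)]
      nlinarith [mul_nonneg hL0 (by linarith : (0:ℝ) ≤ M + 1)]
  obtain ⟨f, hf0, hfd⟩ := hpl.exists_eq_forall_mem_Icc_hasDerivWithinAt₀
  exact ⟨f, hf0, hfd⟩

/-- gluing two solutions -/
lemma NLD_glue {a c e : ℝ} (hac : a ≤ c) (hce : c ≤ e) (f g : ℝ → NLDSp)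
    (hf : ∀ t ∈ Icc a c, HasDerivWithinAt f (NLD b hh hR hB hbB (f t)) (Icc a c) t)
    (hg : ∀ t ∈ Icc c e, HasDerivWithinAt g (NLD b hh hR hB hbB (g t)) (Icc c e) t)
    (hfg : f c = g c) :
    ∃ k : ℝ → NLDSp, (∀ t ≤ c, k t = f t) ∧
      ∀ t ∈ Icc a e, HasDerivWithinAt k (NLD b hh hR hB hbB (k t)) (Icc a e) t := by
  classical
  set k : ℝ → NLDSp := fun t => if t ≤ c then f t else g t with hk
  have hkf : ∀ t ∈ Icc a c, k t = f t := fun t ht => if_pos ht.2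
  have hkg : ∀ t ∈ Icc c e, k t = g t := by
    intro t ht
    by_cases htc : t ≤ c
    · have he : t = c := le_antisymm htc ht.1
      subst he
      show (if t ≤ t then f t else g t) = g t
      rw [if_pos le_rfl, hfg]
    · exact if_neg htc
  refine ⟨k, fun t ht => if_pos ht, ?_⟩
  intro t ht
  have hunion : Icc a c ∪ Icc c e = Icc a e := Icc_union_Icc_eq_Icc hac hce
  have Hleft : ∀ t' ∈ Icc a c, HasDerivWithinAt k (NLD b hh hR hB hbB (k t')) (Icc a c) t' := by
    intro t' ht'
    have h1 := (hf t' ht').congr (fun s hs => hkf s hs) (hkf t' ht')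
    rw [hkf t' ht']
    exact h1
  have Hright : ∀ t' ∈ Icc c e, HasDerivWithinAt k (NLD b hh hR hB hbB (k t')) (Icc c e) t' := by
    intro t' ht'
    have h1 := (hg t' ht').congr (fun s hs => hkg s hs) (hkg t' ht')
    rw [hkg t' ht']
    exact h1
  rcases lt_trichotomy t c with htc | htc | htc
  · have hmem : Icc a c ∈ nhdsWithin t (Icc a e) := by
      apply mem_nhdsWithin.mpr
      exact ⟨Iio c, isOpen_Iio, htc, fun s hs => ⟨hs.2.1, hs.1.le⟩⟩
    exact (Hleft t ⟨ht.1, htc.le⟩).mono_of_mem_nhdsWithin hmem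
  · subst htc
    have := (Hleft t ⟨ht.1, le_refl t⟩).union (Hright t ⟨le_refl t, hce⟩)
    rwa [hunion] at this
  · have hmem : Icc c e ∈ nhdsWithin t (Icc a e) := by
      apply mem_nhdsWithin.mpr
      exact ⟨Ioi c, isOpen_Ioi, htc, fun s hs => ⟨hs.1.le, hs.2.2⟩⟩
    exact (Hright t ⟨htc.le, ht.2⟩).mono_of_mem_nhdsWithin hmem

end NLDExist

noncomputable section NLDGlobal

variable {h : ℝ} (b : ℤ → ℝ) {R B : ℝ}
variable (hh : 0 < h) (hR : 0 ≤ R) (hB : 0 ≤ B) (hbB : ∀ n, |b n| ≤ B)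

lemma NLD_unique_Icc {T : ℝ} (f g : ℝ → NLDSp)
    (hfc : ContinuousOn f (Icc 0 T)) (hgc : ContinuousOn g (Icc 0 T))
    (hf : ∀ t ∈ Ico 0 T, HasDerivWithinAt f (NLD b hh hR hB hbB (f t)) (Ici t) t)
    (hg : ∀ t ∈ Ico 0 T, HasDerivWithinAt g (NLD b hh hR hB hbB (g t)) (Ici t) t)
    (h0 : f 0 = g 0) : EqOn f g (Icc 0 T) := by
  apply ODE_solution_unique_of_mem_Icc_right
    (v := fun _ x => NLD b hh hR hB hbB x) (s := fun _ => univ)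
    (fun t _ => (NLD_lip b hh hR hB hbB).lipschitzOnWith)
    hfc hf (fun t _ => mem_univ _) hgc hg (fun t _ => mem_univ _) h0

lemma hasDerivWithinAt_singleton' (f : ℝ → NLDSp) (x : ℝ) (v : NLDSp) :
    HasDerivWithinAt f v {x} x := by
  rw [hasDerivWithinAt_iff_hasFDerivWithinAt]
  exact HasFDerivWithinAt.of_subsingleton subsingleton_singleton

/-- solutions with derivative within `Icc 0 T` have derivative within `Ici t` -/
lemma NLD_Icc_to_Ici {T : ℝ} (f : ℝ → NLDSp)
    (hf : ∀ t ∈ Icc 0 T, HasDerivWithinAt f (NLD b hh hR hB hbB (f t)) (Icc 0 T) t) :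
    ∀ t ∈ Ico 0 T, HasDerivWithinAt f (NLD b hh hR hB hbB (f t)) (Ici t) t := by
  intro t ht
  have hmem : Icc 0 T ∈ nhdsWithin t (Ici t) := by
    apply mem_nhdsWithin.mpr
    exact ⟨Iio T, isOpen_Iio, ht.2, fun s hs => ⟨ht.1.trans hs.2, hs.1.le⟩⟩
  exact (hf t ⟨ht.1, ht.2.le⟩).mono_of_mem_nhdsWithin hmem

lemma NLD_exists_Icc (φ : NLDSp) (k : ℕ) :
    ∃ ψ : ℝ → NLDSp, ψ 0 = φ ∧
      ∀ t ∈ Icc 0 ((k : ℝ) * (3 * (h⁻¹ + B + 5 * R ^ 2) * (‖toL2 φ‖ + 1) + 1)⁻¹),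
        HasDerivWithinAt ψ (NLD b hh hR hB hbB (ψ t))
          (Icc 0 ((k : ℝ) * (3 * (h⁻¹ + B + 5 * R ^ 2) * (‖toL2 φ‖ + 1) + 1)⁻¹)) t := by
  set τ : ℝ := (3 * (h⁻¹ + B + 5 * R ^ 2) * (‖toL2 φ‖ + 1) + 1)⁻¹ with hτdef
  have hτ0 : 0 < τ := by positivity
  induction k with
  | zero =>
    refine ⟨fun _ => φ, rfl, ?_⟩
    intro t ht
    simp only [Nat.cast_zero, zero_mul, Icc_self, mem_singleton_iff] at ht ⊢
    subst ht
    exact hasDerivWithinAt_singleton' _ _ _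
  | succ k ih =>
    obtain ⟨ψ, hψ0, hψd⟩ := ih
    have hk0 : (0:ℝ) ≤ (k:ℝ) * τ := by positivity
    have hnorm : ‖ψ ((k:ℝ) * τ)‖ ≤ ‖toL2 φ‖ := by
      have := NLD_sol_norm_le b hh hR hB hbB ψ hψd ((k:ℝ) * τ) ⟨hk0, le_refl _⟩
      rwa [hψ0] at this
    obtain ⟨χ, hχ0, hχd⟩ := NLD_local b hh hR hB hbB (norm_nonneg (toL2 φ))
      ((k:ℝ) * τ) (ψ ((k:ℝ) * τ)) hnorm
    have hstep : (k:ℝ) * τ + τ = ((k+1 : ℕ) : ℝ) * τ := by push_cast; ring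
    rw [hstep] at hχd
    obtain ⟨Ψ, hΨf, hΨd⟩ := NLD_glue b hh hR hB hbB hk0
      (by push_cast; nlinarith : (k:ℝ) * τ ≤ ((k+1 : ℕ) : ℝ) * τ)
      ψ χ hψd hχd hχ0.symm
    exact ⟨Ψ, by rw [hΨf 0 hk0, hψ0], hΨd⟩

end NLDGlobal

noncomputable section NLDGlobal2

variable {h : ℝ} (b : ℤ → ℝ) {R B : ℝ}
variable (hh : 0 < h) (hR : 0 ≤ R) (hB : 0 ≤ B) (hbB : ∀ n, |b n| ≤ B)

lemma NLD_exists_Ici (φ : NLDSp) :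
    ∃ Ψ : ℝ → NLDSp, Ψ 0 = φ ∧ (∀ z ∈ Ici (0:ℝ), ‖Ψ z‖ ≤ ‖toL2 φ‖) ∧
      ∀ z ∈ Ici (0:ℝ), HasDerivWithinAt Ψ (NLD b hh hR hB hbB (Ψ z)) (Ici 0) z := by
  classical
  set τ : ℝ := (3 * (h⁻¹ + B + 5 * R ^ 2) * (‖toL2 φ‖ + 1) + 1)⁻¹ with hτdef
  have hτ0 : 0 < τ := by positivity
  set sol : ℕ → ℝ → NLDSp :=
    fun k => Classical.choose (NLD_exists_Icc b hh hR hB hbB φ k) with hsoldef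
  have hsol : ∀ k : ℕ, (sol k) 0 = φ ∧
      ∀ t ∈ Icc 0 ((k : ℝ) * τ), HasDerivWithinAt (sol k)
        (NLD b hh hR hB hbB (sol k t)) (Icc 0 ((k : ℝ) * τ)) t :=
    fun k => Classical.choose_spec (NLD_exists_Icc b hh hR hB hbB φ k)
  have hcompat : ∀ k m : ℕ, k ≤ m → EqOn (sol k) (sol m) (Icc 0 ((k:ℝ) * τ)) := by
    intro k m hkm
    have hkmR : (k:ℝ) * τ ≤ (m:ℝ) * τ := by
      have : (k:ℝ) ≤ (m:ℝ) := by exact_mod_cast hkm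
      nlinarith
    apply NLD_unique_Icc b hh hR hB hbB
    · exact fun t ht => ((hsol k).2 t ht).continuousWithinAt
    · exact fun t ht => (((hsol m).2 t ⟨ht.1, ht.2.trans hkmR⟩).continuousWithinAt).mono
        (Icc_subset_Icc_right hkmR)
    · exact NLD_Icc_to_Ici b hh hR hB hbB (sol k) (hsol k).2
    · intro t ht
      exact NLD_Icc_to_Ici b hh hR hB hbB (sol m) (hsol m).2 t ⟨ht.1, ht.2.trans_le hkmR⟩
    · rw [(hsol k).1, (hsol m).1]
  set Ψ : ℝ → NLDSp := fun z => if 0 ≤ z then sol (Nat.floor (z/τ) + 1) z else φ with hΨdef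
  have key : ∀ (K : ℕ) (z : ℝ), 0 ≤ z → z < (K:ℝ) * τ → Ψ z = sol K z := by
    intro K z hz hzK
    have hΨz : Ψ z = sol (Nat.floor (z/τ) + 1) z := if_pos hz
    set j : ℕ := Nat.floor (z/τ) + 1 with hjdef
    have hzj : z < (j:ℝ) * τ := by
      have h1 : z/τ < (j:ℝ) := by
        rw [hjdef]; push_cast
        exact Nat.lt_floor_add_one (z/τ)
      calc z = (z/τ) * τ := by field_simp
        _ < (j:ℝ) * τ := by nlinarith
    rcases le_total j K with hjK | hKj
    · rw [hΨz]
      exact hcompat j K hjK ⟨hz, hzj.le⟩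
    · rw [hΨz]
      exact (hcompat K j hKj ⟨hz, hzK.le⟩).symm
  have hΨ0 : Ψ 0 = φ := by
    have : Ψ 0 = sol (Nat.floor (0/τ) + 1) 0 := if_pos le_rfl
    rw [this, (hsol _).1]
  refine ⟨Ψ, hΨ0, ?_, ?_⟩
  · intro z hz
    set K : ℕ := Nat.floor (z/τ) + 1 with hKdef
    have hzK : z < (K:ℝ) * τ := by
      have h1 : z/τ < (K:ℝ) := by rw [hKdef]; push_cast; exact Nat.lt_floor_add_one (z/τ)
      calc z = (z/τ) * τ := by field_simp
        _ < (K:ℝ) * τ := by nlinarith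
    rw [key K z hz hzK]
    have := NLD_sol_norm_le b hh hR hB hbB (sol K) (hsol K).2 z ⟨hz, hzK.le⟩
    rwa [(hsol K).1] at this
  · intro z hz
    set K : ℕ := Nat.floor (z/τ) + 1 with hKdef
    have hzK : z < (K:ℝ) * τ := by
      have h1 : z/τ < (K:ℝ) := by rw [hKdef]; push_cast; exact Nat.lt_floor_add_one (z/τ)
      calc z = (z/τ) * τ := by field_simp
        _ < (K:ℝ) * τ := by nlinarith
    have h1 : HasDerivWithinAt (sol K) (NLD b hh hR hB hbB (sol K z)) (Ico 0 ((K:ℝ)*τ)) z :=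
      ((hsol K).2 z ⟨hz, hzK.le⟩).mono Ico_subset_Icc_self
    have h2 : HasDerivWithinAt Ψ (NLD b hh hR hB hbB (sol K z)) (Ico 0 ((K:ℝ)*τ)) z :=
      h1.congr (fun s hs => key K s hs.1 hs.2) (key K z hz hzK)
    have hmem : Ico 0 ((K:ℝ)*τ) ∈ nhdsWithin z (Ici 0) := by
      apply mem_nhdsWithin.mpr
      exact ⟨Iio ((K:ℝ)*τ), isOpen_Iio, hzK, fun s hs => ⟨hs.2, hs.1⟩⟩
    have h3 := h2.mono_of_mem_nhdsWithin hmem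
    rwa [← key K z hz hzK] at h3

end NLDGlobal2

noncomputable section NLDEq

lemma neg_I_mul_I_mul (z : ℂ) : -Complex.I * (Complex.I * z) = z := by
  rw [← mul_assoc, neg_mul, Complex.I_mul_I, neg_neg, one_mul]

lemma I_mul_neg_I_mul (z : ℂ) : Complex.I * (-Complex.I * z) = z := by
  rw [← mul_assoc, mul_neg, Complex.I_mul_I, neg_neg, one_mul]

variable {h : ℝ} (b : ℤ → ℝ) {R B : ℝ}
variable (hh : 0 < h) (hR : 0 ≤ R) (hB : 0 ≤ B) (hbB : ∀ n, |b n| ≤ B)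

lemma NLD_comp_norm_le (x : NLDSp) (n : ℤ) : ‖(x n).1‖ ≤ ‖x‖ ∧ ‖(x n).2‖ ≤ ‖x‖ := by
  have hn : ‖x n‖ ≤ ‖x‖ := lp.norm_apply_le_norm (by norm_num) x n
  exact ⟨(norm_fst_le (x n)).trans hn, (norm_snd_le (x n)).trans hn⟩

lemma NLD_eq_RHS (x : NLDSp) (hx : ‖x‖ ≤ R) (n : ℤ) :
    Complex.I * ((NLD b hh hR hB hbB x) n).1 =
      -Complex.I * (h⁻¹ : ℂ) * ((x (n + 1)).2 - (x n).2)
        + (b n : ℂ) * (x n).1 - (‖(x n).1‖ ^ 2 : ℂ) * (x n).1 ∧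
    Complex.I * ((NLD b hh hR hB hbB x) n).2 =
      -Complex.I * (h⁻¹ : ℂ) * ((x n).1 - (x (n - 1)).1)
        - (b n : ℂ) * (x n).2 - (‖(x n).2‖ ^ 2 : ℂ) * (x n).2 := by
  have h1 := (NLD_comp_norm_le x n).1.trans hx
  have h2 := (NLD_comp_norm_le x n).2.trans hx
  constructor
  · rw [NLD_apply]
    show Complex.I * (nldF h b R ⇑x n).1 = _
    simp only [nldF]
    rw [I_mul_neg_I_mul, nldCub_eq h1]
    push_cast
    ring
  · rw [NLD_apply]
    show Complex.I * (nldF h b R ⇑x n).2 = _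
    simp only [nldF]
    rw [I_mul_neg_I_mul, nldCub_eq h2]
    push_cast
    ring

lemma RHS_eq_NLD (x w : NLDSp) (hx : ‖x‖ ≤ R)
    (heq : ∀ n : ℤ,
      Complex.I * (w n).1 =
        -Complex.I * (h⁻¹ : ℂ) * ((x (n + 1)).2 - (x n).2)
          + (b n : ℂ) * (x n).1 - (‖(x n).1‖ ^ 2 : ℂ) * (x n).1 ∧
      Complex.I * (w n).2 =
        -Complex.I * (h⁻¹ : ℂ) * ((x n).1 - (x (n - 1)).1)
          - (b n : ℂ) * (x n).2 - (‖(x n).2‖ ^ 2 : ℂ) * (x n).2) :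
    w = NLD b hh hR hB hbB x := by
  apply lp.ext
  funext n
  have e1 : Complex.I * (w n).1 = Complex.I * ((NLD b hh hR hB hbB x) n).1 := by
    rw [(heq n).1, (NLD_eq_RHS b hh hR hB hbB x hx n).1]
  have e2 : Complex.I * (w n).2 = Complex.I * ((NLD b hh hR hB hbB x) n).2 := by
    rw [(heq n).2, (NLD_eq_RHS b hh hR hB hbB x hx n).2]
  exact Prod.ext (mul_left_cancel₀ Complex.I_ne_zero e1) (mul_left_cancel₀ Complex.I_ne_zero e2)

end NLDEq

end NLDOpen

/-- Global well-posedness with `ℓ²`-norm conservation for the discrete nonlinear Dirac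
equation modeling a binary waveguide array: for every bounded mass `b : ℤ → ℝ` and every
initial datum `φ ∈ ℓ²(ℤ, ℂ²)` there is a solution on `[0,∞)`, any two solutions agree on
`[0,∞)`, and the `ℓ²` norm is conserved. -/
theorem discrete_NLD_global_wellposedness (h : ℝ) (hh : 0 < h) (b : ℤ → ℝ)
    (hb : ∃ B : ℝ, ∀ n : ℤ, |b n| ≤ B) (φ : lp (fun _ : ℤ => ℂ × ℂ) 2) :
    (∃ ψ : ℝ → lp (fun _ : ℤ => ℂ × ℂ) 2, IsDiscreteNLDSolution h b φ ψ) ∧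
    (∀ ψ χ : ℝ → lp (fun _ : ℤ => ℂ × ℂ) 2,
      IsDiscreteNLDSolution h b φ ψ → IsDiscreteNLDSolution h b φ χ → EqOn ψ χ (Ici 0)) ∧
    (∀ ψ : ℝ → lp (fun _ : ℤ => ℂ × ℂ) 2, IsDiscreteNLDSolution h b φ ψ →
      ∀ z ∈ Ici (0 : ℝ),
        ∑' n : ℤ, (‖((ψ z) n).1‖ ^ 2 + ‖((ψ z) n).2‖ ^ 2) =
          ∑' n : ℤ, (‖(φ n).1‖ ^ 2 + ‖(φ n).2‖ ^ 2)) := by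
  classical
  obtain ⟨B₀, hB₀⟩ := hb
  set B : ℝ := max B₀ 0 with hBdef
  have hB : 0 ≤ B := le_max_right _ _
  have hbB : ∀ n, |b n| ≤ B := fun n => (hB₀ n).trans (le_max_left _ _)
  refine ⟨?_, ?_, ?_⟩
  · -- existence
    set R : ℝ := ‖toL2 φ‖ + 1 with hRdef
    have hR : 0 ≤ R := by positivity
    obtain ⟨Ψ, hΨ0, hΨnorm, hΨd⟩ := NLD_exists_Ici b hh hR hB hbB φ
    refine ⟨Ψ, hΨ0, fun z => NLD b hh hR hB hbB (Ψ z), ?_, hΨd, ?_⟩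
    · exact (NLD_lip b hh hR hB hbB).continuous.comp_continuousOn
        (fun z hz => (hΨd z hz).continuousWithinAt)
    · intro z hz n
      exact NLD_eq_RHS b hh hR hB hbB (Ψ z) ((hΨnorm z hz).trans (by linarith)) n
  · -- uniqueness
    rintro ψ χ ⟨hψ0, ψ', hψ'c, hψ'd, hψ'eq⟩ ⟨hχ0, χ', hχ'c, hχ'd, hχ'eq⟩ z hz
    have hψc : ContinuousOn ψ (Icc 0 z) := fun t ht =>
      ((hψ'd t ht.1).continuousWithinAt).mono (fun s hs => hs.1)
    have hχc : ContinuousOn χ (Icc 0 z) := fun t ht =>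
      ((hχ'd t ht.1).continuousWithinAt).mono (fun s hs => hs.1)
    obtain ⟨C1, hC1⟩ := isCompact_Icc.exists_bound_of_continuousOn hψc
    obtain ⟨C2, hC2⟩ := isCompact_Icc.exists_bound_of_continuousOn hχc
    set R : ℝ := max (max C1 C2) 0 with hRdef
    have hR : 0 ≤ R := le_max_right _ _
    have hψfield : ∀ t ∈ Ico 0 z, HasDerivWithinAt ψ (NLD b hh hR hB hbB (ψ t)) (Ici t) t := by
      intro t ht
      have hd := (hψ'd t ht.1).mono (Ici_subset_Ici.mpr ht.1)
      have he : ψ' t = NLD b hh hR hB hbB (ψ t) :=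
        RHS_eq_NLD b hh hR hB hbB (ψ t) (ψ' t)
          ((hC1 t ⟨ht.1, ht.2.le⟩).trans ((le_max_left C1 C2).trans (le_max_left _ _)))
          (fun n => hψ'eq t ht.1 n)
      rwa [he] at hd
    have hχfield : ∀ t ∈ Ico 0 z, HasDerivWithinAt χ (NLD b hh hR hB hbB (χ t)) (Ici t) t := by
      intro t ht
      have hd := (hχ'd t ht.1).mono (Ici_subset_Ici.mpr ht.1)
      have he : χ' t = NLD b hh hR hB hbB (χ t) :=
        RHS_eq_NLD b hh hR hB hbB (χ t) (χ' t)
          ((hC2 t ⟨ht.1, ht.2.le⟩).trans ((le_max_right C1 C2).trans (le_max_left _ _)))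
          (fun n => hχ'eq t ht.1 n)
      rwa [he] at hd
    exact NLD_unique_Icc b hh hR hB hbB ψ χ hψc hχc hψfield hχfield
      (hψ0.trans hχ0.symm) ⟨hz, le_refl z⟩
  · -- conservation
    rintro ψ ⟨hψ0, ψ', hψ'c, hψ'd, hψ'eq⟩ z hz
    have hψc : ContinuousOn ψ (Icc 0 z) := fun t ht =>
      ((hψ'd t ht.1).continuousWithinAt).mono (fun s hs => hs.1)
    obtain ⟨C1, hC1⟩ := isCompact_Icc.exists_bound_of_continuousOn hψc
    set R : ℝ := max C1 0 with hRdef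
    have hR : 0 ≤ R := le_max_right _ _
    have hd : ∀ t ∈ Icc 0 z, HasDerivWithinAt ψ (NLD b hh hR hB hbB (ψ t)) (Icc 0 z) t := by
      intro t ht
      have hd0 := (hψ'd t ht.1).mono (fun s hs => hs.1 : Icc (0:ℝ) z ⊆ Ici 0)
      have he : ψ' t = NLD b hh hR hB hbB (ψ t) :=
        RHS_eq_NLD b hh hR hB hbB (ψ t) (ψ' t)
          ((hC1 t ht).trans (le_max_left _ _)) (fun n => hψ'eq t ht.1 n)
      rwa [he] at hd0
    have hcons := NLD_conserved b hh hR hB hbB ψ hd z ⟨hz, le_refl z⟩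
    rw [toL2_norm_sq_eq, toL2_norm_sq_eq, hψ0] at hcons
    exact hcons
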